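/- Let $r > 0$, $\kappa < 0$, $r_j > 0$ with $r_j \le r$ and $3r - \kappa - r_j > 0$. For reals $x_j$ and $x_j^*$, set $\xi_j = \lceil x_j\rfloor^{r/r_j} - \lceil x_j^*\rfloor^{r/r_j}$ (signed powers, with $r/r_j \ge 1$). Then $\left|\int_{x_j^*}^{x_j} \left|\lceil s\rfloor^{r/r_j} - \lceil x_j^*\rfloor^{r/r_j}\right|^{(3r-\kappa-r_j)/r} ds\right| \le 2^{1 - r_j/r}\, |\xi_j|^{(3r-\kappa)/r}$. -/

import Mathlib

/-!
Put `p = r / rj`, `q = 1 / p ∈ (0, 1]` and `α = (3r - κ - rj) / r ≥ 0`. Since `s ↦ ⌈s⌋^p` is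
monotone, the integrand is at most `|ξ|^α` between `c` and `x`, so the integral is at most
`|ξ|^α |x - c|`. Writing `x = ⌈⌈x⌋^p⌋^q`, the bound `|⌈u⌋^q - ⌈v⌋^q| ≤ 2^(1-q) |u - v|^q`
(subadditivity of `t ↦ t^q` when `u, v` have the same sign, its concavity otherwise) gives
`|x - c| ≤ 2^(1-q) |ξ|^q`, and `α + q = (3r - κ) / r`.
-/

noncomputable def spow (a b : ℝ) : ℝ := Real.sign a * |a| ^ b

open Set

lemma spow_zero_left (b : ℝ) : spow 0 b = 0 := by simp [spow]

lemma spow_of_pos {a : ℝ} (ha : 0 < a) (b : ℝ) : spow a b = a ^ b := by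
  simp [spow, Real.sign_of_pos ha, abs_of_pos ha]

lemma spow_of_neg {a : ℝ} (ha : a < 0) (b : ℝ) : spow a b = -(-a) ^ b := by
  simp [spow, Real.sign_of_neg ha, abs_of_neg ha]

lemma spow_of_nonneg {a b : ℝ} (ha : 0 ≤ a) (hb : b ≠ 0) : spow a b = a ^ b := by
  rcases ha.eq_or_lt with rfl | ha
  · rw [spow_zero_left, Real.zero_rpow hb]
  · exact spow_of_pos ha b

lemma spow_neg (a b : ℝ) : spow (-a) b = -spow a b := by
  simp [spow, Real.sign_neg]

lemma spow_of_nonpos {a b : ℝ} (ha : a ≤ 0) (hb : b ≠ 0) : spow a b = -(-a) ^ b := by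
  rw [← spow_of_nonneg (neg_nonneg.2 ha) hb, spow_neg, neg_neg]

lemma spow_spow (a b c : ℝ) : spow (spow a b) c = spow a (b * c) := by
  rcases lt_trichotomy a 0 with ha | rfl | ha
  · have ha' : 0 < -a := neg_pos.2 ha
    rw [spow_of_neg ha, spow_neg, spow_of_pos (Real.rpow_pos_of_pos ha' b),
      ← Real.rpow_mul ha'.le, spow_of_neg ha]
  · simp only [spow_zero_left]
  · rw [spow_of_pos ha, spow_of_pos (Real.rpow_pos_of_pos ha b), spow_of_pos ha,
      Real.rpow_mul ha.le]

lemma spow_spow_of_mul_eq_one {b c : ℝ} (hbc : b * c = 1) (a : ℝ) : spow (spow a b) c = a := by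
  rcases le_total 0 a with ha | ha
  · rw [spow_spow, hbc, spow_of_nonneg ha one_ne_zero, Real.rpow_one]
  · rw [spow_spow, hbc, spow_of_nonpos ha one_ne_zero, Real.rpow_one, neg_neg]

lemma spow_monotone {b : ℝ} (hb : 0 < b) : Monotone (spow · b) := by
  intro u v huv
  dsimp only
  rcases le_total 0 u with hu | hu
  · rw [spow_of_nonneg hu hb.ne', spow_of_nonneg (hu.trans huv) hb.ne']
    exact Real.rpow_le_rpow hu huv hb.le
  rcases le_total v 0 with hv | hv
  · rw [spow_of_nonpos hu hb.ne', spow_of_nonpos hv hb.ne', neg_le_neg_iff]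
    exact Real.rpow_le_rpow (neg_nonneg.2 hv) (neg_le_neg huv) hb.le
  · rw [spow_of_nonpos hu hb.ne', spow_of_nonneg hv hb.ne']
    have := Real.rpow_nonneg (neg_nonneg.2 hu) b
    have := Real.rpow_nonneg hv b
    linarith

lemma rpow_sub_rpow_le_rpow_sub {a b q : ℝ} (hb : 0 ≤ b) (hba : b ≤ a) (hq0 : 0 ≤ q)
    (hq1 : q ≤ 1) : a ^ q - b ^ q ≤ (a - b) ^ q := by
  have := Real.rpow_add_le_add_rpow (sub_nonneg.2 hba) hb hq0 hq1
  rw [sub_add_cancel] at this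
  linarith

-- Midpoint concavity of `t ↦ t ^ q`.
lemma rpow_add_rpow_le_two_rpow_mul_add_rpow {a b q : ℝ} (ha : 0 ≤ a) (hb : 0 ≤ b) (hq0 : 0 ≤ q)
    (hq1 : q ≤ 1) : a ^ q + b ^ q ≤ 2 ^ (1 - q) * (a + b) ^ q := by
  have h := (Real.concaveOn_rpow hq0 hq1).2 ha hb (by norm_num : (0:ℝ) ≤ 2⁻¹)
    (by norm_num : (0:ℝ) ≤ 2⁻¹) (by norm_num)
  simp only [smul_eq_mul, ← mul_add] at h
  rw [Real.mul_rpow (by norm_num) (by positivity), Real.inv_rpow zero_le_two] at h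
  rw [Real.rpow_sub two_pos, Real.rpow_one, div_mul_eq_mul_div, le_div_iff₀ (by positivity)]
  have h2q : 0 < (2:ℝ) ^ q := by positivity
  field_simp at h
  linarith

lemma spow_sub_spow_le {u v q : ℝ} (hvu : v ≤ u) (hq0 : 0 < q) (hq1 : q ≤ 1) :
    spow u q - spow v q ≤ 2 ^ (1 - q) * (u - v) ^ q := by
  have hdist : 0 ≤ (u - v) ^ q := Real.rpow_nonneg (sub_nonneg.2 hvu) q
  have hconst : 1 ≤ (2 : ℝ) ^ (1 - q) := Real.one_le_rpow one_le_two (by linarith)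
  rcases le_total 0 v with hv | hv
  · calc spow u q - spow v q = u ^ q - v ^ q := by
          rw [spow_of_nonneg (hv.trans hvu) hq0.ne', spow_of_nonneg hv hq0.ne']
      _ ≤ (u - v) ^ q := rpow_sub_rpow_le_rpow_sub hv hvu hq0.le hq1
      _ ≤ 2 ^ (1 - q) * (u - v) ^ q := le_mul_of_one_le_left hdist hconst
  rcases le_total u 0 with hu | hu
  · calc spow u q - spow v q = (-v) ^ q - (-u) ^ q := by
          rw [spow_of_nonpos hu hq0.ne', spow_of_nonpos hv hq0.ne', neg_sub_neg]
      _ ≤ (-v - -u) ^ q :=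
        rpow_sub_rpow_le_rpow_sub (neg_nonneg.2 hu) (neg_le_neg hvu) hq0.le hq1
      _ = (u - v) ^ q := by rw [neg_sub_neg]
      _ ≤ 2 ^ (1 - q) * (u - v) ^ q := le_mul_of_one_le_left hdist hconst
  · calc spow u q - spow v q = u ^ q + (-v) ^ q := by
          rw [spow_of_nonneg hu hq0.ne', spow_of_nonpos hv hq0.ne', sub_neg_eq_add]
      _ ≤ 2 ^ (1 - q) * (u + -v) ^ q :=
        rpow_add_rpow_le_two_rpow_mul_add_rpow hu (neg_nonneg.2 hv) hq0.le hq1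
      _ = 2 ^ (1 - q) * (u - v) ^ q := by rw [← sub_eq_add_neg]

lemma abs_spow_sub_spow_le {q : ℝ} (hq0 : 0 < q) (hq1 : q ≤ 1) (u v : ℝ) :
    |spow u q - spow v q| ≤ 2 ^ (1 - q) * |u - v| ^ q := by
  wlog hvu : v ≤ u generalizing u v
  · rw [abs_sub_comm, abs_sub_comm u]
    exact this v u (le_of_not_ge hvu)
  rw [abs_of_nonneg (sub_nonneg.2 (spow_monotone hq0 hvu)), abs_of_nonneg (sub_nonneg.2 hvu)]
  exact spow_sub_spow_le hvu hq0 hq1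

lemma abs_integral_abs_sub_rpow_le {f : ℝ → ℝ} (hf : Monotone f) {α : ℝ} (hα : 0 ≤ α) (c x : ℝ) :
    |∫ s in c..x, |f s - f c| ^ α| ≤ |f x - f c| ^ α * |x - c| := by
  refine (Real.norm_eq_abs _).ge.trans <|
    intervalIntegral.norm_integral_le_of_norm_le_const fun s hs => ?_
  have hfs : f s ∈ uIcc (f c) (f x) := hf.image_uIcc_subset ⟨s, uIoc_subset_uIcc hs, rfl⟩
  rw [Real.norm_eq_abs, abs_of_nonneg (by positivity)]
  exact Real.rpow_le_rpow (abs_nonneg _) (abs_sub_left_of_mem_uIcc hfs) hα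

theorem stmt_12_general (r κ rj : ℝ) (hr : 0 < r) (hrj : 0 < rj) (hrjr : rj ≤ r)
    (hpow : 0 < 3 * r - κ - rj) (x c : ℝ)
    (ξ : ℝ) (hξ : ξ = spow x (r / rj) - spow c (r / rj)) :
    |∫ s in c..x, |spow s (r / rj) - spow c (r / rj)| ^ ((3 * r - κ - rj) / r)|
      ≤ 2 ^ (1 - rj / r) * |ξ| ^ ((3 * r - κ) / r) := by
  set α := (3 * r - κ - rj) / r
  have hα : 0 ≤ α := div_nonneg hpow.le hr.le
  have hq0 : 0 < rj / r := div_pos hrj hr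
  have hq1 : rj / r ≤ 1 := (div_le_one hr).2 hrjr
  have hpq : r / rj * (rj / r) = 1 := by field_simp
  have hexp : α + rj / r = (3 * r - κ) / r := by rw [← add_div]; ring_nf
  have hdist : |x - c| ≤ 2 ^ (1 - rj / r) * |ξ| ^ (rj / r) := by
    simpa only [spow_spow_of_mul_eq_one hpq, ← hξ] using
      abs_spow_sub_spow_le hq0 hq1 (spow x (r / rj)) (spow c (r / rj))
  calc _ ≤ |ξ| ^ α * |x - c| :=
        hξ ▸ abs_integral_abs_sub_rpow_le (spow_monotone (div_pos hr hrj)) hα c x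
    _ ≤ |ξ| ^ α * (2 ^ (1 - rj / r) * |ξ| ^ (rj / r)) := by gcongr
    _ = 2 ^ (1 - rj / r) * |ξ| ^ ((3 * r - κ) / r) := by
      rw [← hexp, Real.rpow_add_of_nonneg (abs_nonneg ξ) hα hq0.le]; ring

theorem stmt_12 (r κ rj : ℝ) (hr : 0 < r) (hκ : κ < 0) (hrj : 0 < rj) (hrjr : rj ≤ r)
    (hpow : 0 < 3 * r - κ - rj) (x c : ℝ)
    (ξ : ℝ) (hξ : ξ = spow x (r / rj) - spow c (r / rj)) :
    |∫ s in c..x, |spow s (r / rj) - spow c (r / rj)| ^ ((3 * r - κ - rj) / r)|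
      ≤ 2 ^ (1 - rj / r) * |ξ| ^ ((3 * r - κ) / r) :=
  stmt_12_general r κ rj hr hrj hrjr hpow x c ξ hξ
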